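/- Let H and B be Hopf algebras over a field k, with Hopf algebra maps i : B → H and π : H → B such that π ∘ i = id_B. Let A = H^{co π} = { h ∈ H : Σ h₁ ⊗ π(h₂) = h ⊗ 1_B }, let j : A → H be the inclusion, and define p : H → A by p(h) = Σ h₁ i(s(π(h₂))) (which lands in A). Then the linear map ζ : A ⊗ B → H, ζ(a ⊗ b) = j(a) i(b), is a k-linear isomorphism with inverse ζ⁻¹(h) = Σ p(h₁) ⊗ π(h₂). -/
import Mathlib


open TensorProduct

variable {k H B : Type*} [Field k] [Ring H] [HopfAlgebra k H]
  [Ring B] [HopfAlgebra k B]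

/-- `p̃(h) = Σ h₁ · i(s(π(h₂)))`, where `s` is the antipode of `B`. -/
noncomputable def ptilde (π : H →ₐ[k] B) (i : B →ₐ[k] H) : H →ₗ[k] H :=
  LinearMap.mul' k H ∘ₗ
    TensorProduct.map (LinearMap.id : H →ₗ[k] H)
      (i.toLinearMap ∘ₗ HopfAlgebra.antipode (R := k) (A := B) ∘ₗ π.toLinearMap) ∘ₗ
    Coalgebra.comul (R := k) (A := H)

/-- The coinvariants `H^{co π}` as a submodule of `H`. -/
noncomputable def coinv (π : H →ₐ[k] B) : Submodule k H :=
  LinearMap.ker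
    (TensorProduct.map (LinearMap.id : H →ₗ[k] H) π.toLinearMap ∘ₗ
        Coalgebra.comul (R := k) (A := H) -
      (TensorProduct.mk k H B).flip (1 : B))

/-- `ζ : A ⊗ B → H`, `ζ(a ⊗ b) = a · i(b)`. -/
noncomputable def zetaMap (π : H →ₐ[k] B) (i : B →ₐ[k] H) :
    (↥(coinv π)) ⊗[k] B →ₗ[k] H :=
  LinearMap.mul' k H ∘ₗ TensorProduct.map (coinv π).subtype i.toLinearMap

set_option maxHeartbeats 1000000
set_option synthInstance.maxHeartbeats 200000

open LinearMap

section Conv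
variable (R : Type*) [CommSemiring R]
variable {C A : Type*} [AddCommMonoid C] [Module R C] [Coalgebra R C]
  [Semiring A] [Algebra R A]

/-- convolution product -/
noncomputable def conv (f g : C →ₗ[R] A) : C →ₗ[R] A :=
  LinearMap.mul' R A ∘ₗ TensorProduct.map f g ∘ₗ Coalgebra.comul

variable {R}

lemma mul'_assoc' :
    LinearMap.mul' R A ∘ₗ (LinearMap.mul' R A).rTensor A =
      (LinearMap.mul' R A ∘ₗ (LinearMap.mul' R A).lTensor A) ∘ₗ
        (TensorProduct.assoc R A A A).toLinearMap := by
  apply TensorProduct.ext_threefold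
  intro a b c
  simp [mul_assoc]

lemma conv_assoc (f g h : C →ₗ[R] A) :
    conv R (conv R f g) h = conv R f (conv R g h) := by
  have e1 : map (conv R f g) h =
      (mul' R A).rTensor A ∘ₗ map (map f g) h ∘ₗ
        (Coalgebra.comul (R := R) (A := C)).rTensor C := by
    rw [conv, ← rTensor_comp_map, ← map_comp_rTensor]
  have e2 : map f (conv R g h) =
      (mul' R A).lTensor A ∘ₗ map f (map g h) ∘ₗ
        (Coalgebra.comul (R := R) (A := C)).lTensor C := by
    rw [conv, ← lTensor_comp_map, ← map_comp_lTensor]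
  rw [show conv R (conv R f g) h = mul' R A ∘ₗ map (conv R f g) h ∘ₗ Coalgebra.comul from rfl,
    show conv R f (conv R g h) = mul' R A ∘ₗ map f (conv R g h) ∘ₗ Coalgebra.comul from rfl,
    e1, e2]
  show (mul' R A ∘ₗ (mul' R A).rTensor A) ∘ₗ map (map f g) h ∘ₗ
      ((Coalgebra.comul (R := R) (A := C)).rTensor C ∘ₗ Coalgebra.comul) = _
  rw [mul'_assoc']
  show (mul' R A ∘ₗ (mul' R A).lTensor A) ∘ₗ
      ((TensorProduct.assoc R A A A).toLinearMap ∘ₗ map (map f g) h) ∘ₗ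
      ((Coalgebra.comul (R := R) (A := C)).rTensor C ∘ₗ Coalgebra.comul) = _
  rw [← map_map_comp_assoc_eq]
  show (mul' R A ∘ₗ (mul' R A).lTensor A) ∘ₗ map f (map g h) ∘ₗ
      ((TensorProduct.assoc R C C C).toLinearMap ∘ₗ
        (Coalgebra.comul (R := R) (A := C)).rTensor C ∘ₗ Coalgebra.comul) = _
  rw [Coalgebra.coassoc]
  rfl

lemma conv_unit_right (f : C →ₗ[R] A) :
    conv R f (Algebra.linearMap R A ∘ₗ Coalgebra.counit) = f := by
  rw [conv, ← map_comp_lTensor]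
  show mul' R A ∘ₗ map f (Algebra.linearMap R A) ∘ₗ
      ((Coalgebra.counit (R := R) (A := C)).lTensor C ∘ₗ Coalgebra.comul) = f
  rw [Coalgebra.lTensor_counit_comp_comul]
  ext c
  simp

lemma conv_unit_left (f : C →ₗ[R] A) :
    conv R (Algebra.linearMap R A ∘ₗ Coalgebra.counit) f = f := by
  rw [conv, ← map_comp_rTensor]
  show mul' R A ∘ₗ map (Algebra.linearMap R A) f ∘ₗ
      ((Coalgebra.counit (R := R) (A := C)).rTensor C ∘ₗ Coalgebra.comul) = f
  rw [Coalgebra.rTensor_counit_comp_comul]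
  ext c
  simp

end Conv

section Conv2
variable {R : Type*} [CommSemiring R]
variable {C C' A A₂ : Type*} [AddCommMonoid C] [Module R C] [Coalgebra R C]
  [AddCommMonoid C'] [Module R C'] [Coalgebra R C']
  [Semiring A] [Algebra R A] [Semiring A₂] [Algebra R A₂]

lemma mul'_comp_map_algHom (φ : A →ₐ[R] A₂) :
    mul' R A₂ ∘ₗ map φ.toLinearMap φ.toLinearMap = φ.toLinearMap ∘ₗ mul' R A := by
  apply TensorProduct.ext'
  intro a b
  simp

lemma algHom_comp_conv (φ : A →ₐ[R] A₂) (f g : C →ₗ[R] A) :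
    φ.toLinearMap ∘ₗ conv R f g = conv R (φ.toLinearMap ∘ₗ f) (φ.toLinearMap ∘ₗ g) := by
  rw [conv, conv, map_comp]
  show φ.toLinearMap ∘ₗ mul' R A ∘ₗ map f g ∘ₗ Coalgebra.comul
      = (mul' R A₂ ∘ₗ map φ.toLinearMap φ.toLinearMap) ∘ₗ map f g ∘ₗ Coalgebra.comul
  rw [mul'_comp_map_algHom]
  rfl

lemma conv_comp_coalgHom (q : C' →ₗ[R] C)
    (hq : map q q ∘ₗ Coalgebra.comul = Coalgebra.comul ∘ₗ q) (f g : C →ₗ[R] A) :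
    conv R f g ∘ₗ q = conv R (f ∘ₗ q) (g ∘ₗ q) := by
  rw [conv, conv, map_comp]
  show mul' R A ∘ₗ map f g ∘ₗ Coalgebra.comul ∘ₗ q = _
  rw [← hq]
  rfl

lemma conv_antipode_id {A : Type*} [Semiring A] [HopfAlgebra R A] :
    conv R (HopfAlgebra.antipode (R := R) (A := A)) LinearMap.id =
      Algebra.linearMap R A ∘ₗ Coalgebra.counit := by
  rw [conv, ← HopfAlgebra.mul_antipode_rTensor_comul]
  rfl

lemma conv_id_antipode {A : Type*} [Semiring A] [HopfAlgebra R A] :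
    conv R LinearMap.id (HopfAlgebra.antipode (R := R) (A := A)) =
      Algebra.linearMap R A ∘ₗ Coalgebra.counit := by
  rw [conv, ← HopfAlgebra.mul_antipode_lTensor_comul]
  rfl

end Conv2

section BSide

local notation "S" => HopfAlgebra.antipode (R := k) (A := B)
local notation "ΔB" => (Coalgebra.comul (R := k) (A := B))

lemma N1 : mul' k (B ⊗[k] B) ∘ₗ map ((TensorProduct.mk k B B).flip 1) LinearMap.id =
    (mul' k B).rTensor B ∘ₗ (TensorProduct.assoc k B B B).symm.toLinearMap := by
  apply TensorProduct.ext'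
  intro x y
  induction y using TensorProduct.induction_on with
  | zero => simp only [tmul_zero, _root_.map_zero]
  | tmul c d => simp [Algebra.TensorProduct.tmul_mul_tmul]
  | add u v hu hv => simp only [tmul_add, _root_.map_add, hu, hv]

lemma N2 : (Algebra.linearMap k B).rTensor B ∘ₗ TensorProduct.mk k k B 1 =
    TensorProduct.mk k B B 1 := by
  ext b
  simp

lemma c2lemma :
    conv k (((TensorProduct.mk k B B).flip 1) ∘ₗ S) ΔB = TensorProduct.mk k B B 1 := by
  have e1 : map ((((TensorProduct.mk k B B).flip 1)) ∘ₗ S) ΔB =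
      map ((TensorProduct.mk k B B).flip 1) LinearMap.id ∘ₗ map S ΔB := by
    rw [← map_comp, id_comp]
  have e2 : map S ΔB = map S (LinearMap.id : B ⊗[k] B →ₗ[k] B ⊗[k] B) ∘ₗ
      lTensor B ΔB := by
    rw [lTensor, ← map_comp, comp_id, id_comp]
  rw [conv, e1]
  show (mul' k (B ⊗[k] B) ∘ₗ map ((TensorProduct.mk k B B).flip 1) LinearMap.id) ∘ₗ
    map S ΔB ∘ₗ ΔB = _
  rw [N1, e2]
  show (mul' k B).rTensor B ∘ₗ (TensorProduct.assoc k B B B).symm.toLinearMap ∘ₗ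
    map S LinearMap.id ∘ₗ (lTensor B ΔB ∘ₗ ΔB) = _
  rw [← Coalgebra.coassoc]
  have e3 : map S (LinearMap.id : B ⊗[k] B →ₗ[k] B ⊗[k] B) ∘ₗ
      (TensorProduct.assoc k B B B).toLinearMap =
      (TensorProduct.assoc k B B B).toLinearMap ∘ₗ map (map S LinearMap.id) LinearMap.id := by
    have := map_map_comp_assoc_eq (R := k) S (LinearMap.id : B →ₗ[k] B)
      (LinearMap.id : B →ₗ[k] B)
    rwa [map_id] at this
  have e4 : (TensorProduct.assoc k B B B).symm.toLinearMap ∘ₗ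
      ((TensorProduct.assoc k B B B).toLinearMap ∘ₗ map (map S LinearMap.id) LinearMap.id) =
      map (map S LinearMap.id) LinearMap.id := by
    rw [← comp_assoc]
    ext x
    simp
  show (mul' k B).rTensor B ∘ₗ (TensorProduct.assoc k B B B).symm.toLinearMap ∘ₗ
    (map S LinearMap.id ∘ₗ (TensorProduct.assoc k B B B).toLinearMap) ∘ₗ
    rTensor B ΔB ∘ₗ ΔB = _
  rw [e3]
  show (mul' k B).rTensor B ∘ₗ ((TensorProduct.assoc k B B B).symm.toLinearMap ∘ₗ
    ((TensorProduct.assoc k B B B).toLinearMap ∘ₗ map (map S LinearMap.id) LinearMap.id)) ∘ₗ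
    rTensor B ΔB ∘ₗ ΔB = _
  rw [e4]
  have e5 : (mul' k B).rTensor B ∘ₗ map (map S LinearMap.id) LinearMap.id ∘ₗ rTensor B ΔB =
      (mul' k B ∘ₗ rTensor B S ∘ₗ ΔB).rTensor B := by
    rw [rTensor_comp, rTensor_comp]
    rfl
  show ((mul' k B).rTensor B ∘ₗ map (map S LinearMap.id) LinearMap.id ∘ₗ rTensor B ΔB) ∘ₗ
    ΔB = _
  rw [e5, HopfAlgebra.mul_antipode_rTensor_comul, rTensor_comp]
  show (Algebra.linearMap k B).rTensor B ∘ₗ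
    ((Coalgebra.counit (R := k) (A := B)).rTensor B ∘ₗ ΔB) = _
  rw [Coalgebra.rTensor_counit_comp_comul, N2]

end BSide

section BSide2

local notation "S" => HopfAlgebra.antipode (R := k) (A := B)
local notation "ΔB" => (Coalgebra.comul (R := k) (A := B))

lemma c1lemma :
    conv k (ΔB : B →ₗ[k] B ⊗[k] B) ((ΔB : B →ₗ[k] B ⊗[k] B) ∘ₗ S) =
      Algebra.linearMap k (B ⊗[k] B) ∘ₗ Coalgebra.counit := by
  have h := algHom_comp_conv (Bialgebra.comulAlgHom k B) (LinearMap.id : B →ₗ[k] B) S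
  rw [conv_id_antipode] at h
  have hl : (Bialgebra.comulAlgHom k B).toLinearMap = (ΔB : B →ₗ[k] B ⊗[k] B) := rfl
  rw [hl, comp_id] at h
  rw [← h, ← comp_assoc]
  congr 1
  ext
  simp [Algebra.TensorProduct.one_def]

lemma cMain :
    conv k (TensorProduct.mk k B B 1) ((ΔB : B →ₗ[k] B ⊗[k] B) ∘ₗ S) =
      ((TensorProduct.mk k B B).flip 1) ∘ₗ S := by
  rw [← c2lemma, conv_assoc, c1lemma, conv_unit_right]

end BSide2

lemma AT_map_toLinearMap {R A A' B B' : Type*} [CommSemiring R] [Semiring A] [Algebra R A]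
    [Semiring A'] [Algebra R A'] [Semiring B] [Algebra R B] [Semiring B'] [Algebra R B']
    (φ : A →ₐ[R] A') (ψ : B →ₐ[R] B') :
    (Algebra.TensorProduct.map φ ψ).toLinearMap = map φ.toLinearMap ψ.toLinearMap :=
  TensorProduct.ext' fun _ _ => rfl

section Main

local notation "S" => HopfAlgebra.antipode (R := k) (A := B)
local notation "ΔB" => (Coalgebra.comul (R := k) (A := B))
local notation "ΔH" => (Coalgebra.comul (R := k) (A := H))

variable (π : H →ₐ[k] B) (i : B →ₐ[k] H)

/-- `i ∘ s ∘ π` as a linear map. -/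
noncomputable def fm : H →ₗ[k] H :=
  i.toLinearMap ∘ₗ HopfAlgebra.antipode (R := k) (A := B) ∘ₗ π.toLinearMap

lemma qj_id (hπi : ∀ b : B, π (i b) = b) :
    π.toLinearMap ∘ₗ i.toLinearMap = LinearMap.id := by
  ext b; simp [hπi]

lemma ju : i.toLinearMap ∘ₗ Algebra.linearMap k B = Algebra.linearMap k H := by
  ext
  simp

lemma convI
    (hπΔ : TensorProduct.map π.toLinearMap π.toLinearMap ∘ₗ ΔH = ΔB ∘ₗ π.toLinearMap)
    (hπε : Coalgebra.counit (R := k) (A := B) ∘ₗ π.toLinearMap =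
      Coalgebra.counit (R := k) (A := H)) :
    conv k (fm π i) (i.toLinearMap ∘ₗ π.toLinearMap) =
      Algebra.linearMap k H ∘ₗ Coalgebra.counit := by
  have h1 := conv_comp_coalgHom (q := π.toLinearMap) hπΔ
    (i.toLinearMap ∘ₗ HopfAlgebra.antipode (R := k) (A := B)) i.toLinearMap
  have h2 := algHom_comp_conv i (HopfAlgebra.antipode (R := k) (A := B)) LinearMap.id
  rw [conv_antipode_id, comp_id] at h2
  rw [show fm π i = (i.toLinearMap ∘ₗ HopfAlgebra.antipode (R := k) (A := B)) ∘ₗ π.toLinearMap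
    from rfl, ← h1, ← h2]
  show (i.toLinearMap ∘ₗ Algebra.linearMap k B) ∘ₗ Coalgebra.counit ∘ₗ π.toLinearMap = _
  rw [hπε, ju]

lemma ptilde_eq_conv : ptilde π i = conv k LinearMap.id (fm π i) := rfl

lemma conv_ptilde
    (hπΔ : TensorProduct.map π.toLinearMap π.toLinearMap ∘ₗ ΔH = ΔB ∘ₗ π.toLinearMap)
    (hπε : Coalgebra.counit (R := k) (A := B) ∘ₗ π.toLinearMap =
      Coalgebra.counit (R := k) (A := H)) :
    conv k (ptilde π i) (i.toLinearMap ∘ₗ π.toLinearMap) = LinearMap.id := by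
  rw [ptilde_eq_conv, conv_assoc, convI π i hπΔ hπε, conv_unit_right]

/-- `Φ = (id ⊗ π) ∘ Δ` as a linear map. -/
noncomputable def PhiL : H →ₗ[k] H ⊗[k] B :=
  map LinearMap.id π.toLinearMap ∘ₗ Coalgebra.comul

/-- `Φ` as an algebra map. -/
noncomputable def PhiA : H →ₐ[k] H ⊗[k] B :=
  (Algebra.TensorProduct.map (AlgHom.id k H) π).comp (Bialgebra.comulAlgHom k H)

lemma PhiA_toLin : (PhiA π).toLinearMap = PhiL π := by
  rw [PhiA, AlgHom.comp_toLinearMap, AT_map_toLinearMap]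
  rfl

lemma rhoH_toLin :
    (Algebra.TensorProduct.includeLeft : H →ₐ[k] H ⊗[k] B).toLinearMap =
      (TensorProduct.mk k H B).flip 1 :=
  LinearMap.ext fun _ => rfl

lemma mzeroH : mul' k (H ⊗[k] B) ∘ₗ
    map ((TensorProduct.mk k H B).flip 1) (TensorProduct.mk k H B 1) = LinearMap.id := by
  apply TensorProduct.ext'
  intro x y
  simp [Algebra.TensorProduct.tmul_mul_tmul]

lemma Phi_conv_form : PhiL π =
    conv k ((TensorProduct.mk k H B).flip 1) (TensorProduct.mk k H B 1 ∘ₗ π.toLinearMap) := by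
  rw [conv]
  have h : map ((TensorProduct.mk k H B).flip 1) (TensorProduct.mk k H B 1 ∘ₗ π.toLinearMap) =
      map ((TensorProduct.mk k H B).flip 1) (TensorProduct.mk k H B 1) ∘ₗ
        map LinearMap.id π.toLinearMap := by
    rw [← map_comp, comp_id]
  rw [h]
  show _ = (mul' k (H ⊗[k] B) ∘ₗ
    map ((TensorProduct.mk k H B).flip 1) (TensorProduct.mk k H B 1)) ∘ₗ
    map LinearMap.id π.toLinearMap ∘ₗ ΔH
  rw [mzeroH, id_comp, PhiL]

lemma theta_f0 : map i.toLinearMap LinearMap.id ∘ₗ TensorProduct.mk k B B 1 =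
    TensorProduct.mk k H B 1 := by
  ext b
  simp

lemma rho_j : ((TensorProduct.mk k H B).flip 1) ∘ₗ i.toLinearMap =
    map i.toLinearMap LinearMap.id ∘ₗ ((TensorProduct.mk k B B).flip 1) := by
  ext b
  simp

lemma Phi_j (hiΔ : TensorProduct.map i.toLinearMap i.toLinearMap ∘ₗ ΔB = ΔH ∘ₗ i.toLinearMap)
    (hπi : ∀ b : B, π (i b) = b) :
    PhiL π ∘ₗ i.toLinearMap = map i.toLinearMap LinearMap.id ∘ₗ ΔB := by
  rw [PhiL]
  show map LinearMap.id π.toLinearMap ∘ₗ (ΔH ∘ₗ i.toLinearMap) = _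
  rw [← hiΔ]
  show (map LinearMap.id π.toLinearMap ∘ₗ map i.toLinearMap i.toLinearMap) ∘ₗ ΔB = _
  rw [← map_comp, id_comp, qj_id π i hπi]

lemma theta_conv
    (hπΔ : TensorProduct.map π.toLinearMap π.toLinearMap ∘ₗ ΔH = ΔB ∘ₗ π.toLinearMap)
    (α β : B →ₗ[k] B ⊗[k] B) :
    map i.toLinearMap (LinearMap.id : B →ₗ[k] B) ∘ₗ conv k α β ∘ₗ π.toLinearMap =
      conv k (map i.toLinearMap (LinearMap.id : B →ₗ[k] B) ∘ₗ α ∘ₗ π.toLinearMap)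
        (map i.toLinearMap (LinearMap.id : B →ₗ[k] B) ∘ₗ β ∘ₗ π.toLinearMap) := by
  have h1 := conv_comp_coalgHom (q := π.toLinearMap) hπΔ α β
  have h2 := algHom_comp_conv (Algebra.TensorProduct.map i (AlgHom.id k B))
    (α ∘ₗ π.toLinearMap) (β ∘ₗ π.toLinearMap)
  rw [AT_map_toLinearMap] at h2
  rw [show (AlgHom.id k B).toLinearMap = (LinearMap.id : B →ₗ[k] B) from rfl] at h2
  show map i.toLinearMap LinearMap.id ∘ₗ (conv k α β ∘ₗ π.toLinearMap) = _
  rw [h1, h2]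

lemma Phi_comp_ptilde
    (hπΔ : TensorProduct.map π.toLinearMap π.toLinearMap ∘ₗ ΔH = ΔB ∘ₗ π.toLinearMap)
    (hiΔ : TensorProduct.map i.toLinearMap i.toLinearMap ∘ₗ ΔB = ΔH ∘ₗ i.toLinearMap)
    (hπi : ∀ b : B, π (i b) = b) :
    PhiL π ∘ₗ ptilde π i = ((TensorProduct.mk k H B).flip 1) ∘ₗ ptilde π i := by
  have h1 := algHom_comp_conv (PhiA π) LinearMap.id (fm π i)
  rw [PhiA_toLin, comp_id] at h1
  have h2 : PhiL π ∘ₗ fm π i =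
      map i.toLinearMap (LinearMap.id : B →ₗ[k] B) ∘ₗ
        ((ΔB : B →ₗ[k] B ⊗[k] B) ∘ₗ HopfAlgebra.antipode (R := k) (A := B)) ∘ₗ
        π.toLinearMap := by
    show (PhiL π ∘ₗ i.toLinearMap) ∘ₗ
      HopfAlgebra.antipode (R := k) (A := B) ∘ₗ π.toLinearMap = _
    rw [Phi_j π i hiΔ hπi]
    rfl
  have h3 := algHom_comp_conv (Algebra.TensorProduct.includeLeft : H →ₐ[k] H ⊗[k] B)
    LinearMap.id (fm π i)
  rw [rhoH_toLin, comp_id] at h3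
  have h4 : ((TensorProduct.mk k H B).flip 1) ∘ₗ fm π i =
      map i.toLinearMap (LinearMap.id : B →ₗ[k] B) ∘ₗ
        (((TensorProduct.mk k B B).flip 1) ∘ₗ HopfAlgebra.antipode (R := k) (A := B)) ∘ₗ
        π.toLinearMap := by
    show (((TensorProduct.mk k H B).flip 1) ∘ₗ i.toLinearMap) ∘ₗ
      HopfAlgebra.antipode (R := k) (A := B) ∘ₗ π.toLinearMap = _
    rw [rho_j]
    rfl
  rw [ptilde_eq_conv, h1, h3, h2, h4]
  have h5 : TensorProduct.mk k H B 1 ∘ₗ π.toLinearMap =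
      map i.toLinearMap (LinearMap.id : B →ₗ[k] B) ∘ₗ
        TensorProduct.mk k B B 1 ∘ₗ π.toLinearMap := by
    rw [show map i.toLinearMap (LinearMap.id : B →ₗ[k] B) ∘ₗ
      TensorProduct.mk k B B 1 ∘ₗ π.toLinearMap =
      (map i.toLinearMap (LinearMap.id : B →ₗ[k] B) ∘ₗ TensorProduct.mk k B B 1) ∘ₗ
        π.toLinearMap from rfl, theta_f0]
  rw [Phi_conv_form π, h5, conv_assoc, ← theta_conv π i hπΔ, cMain]

lemma hmem_all
    (hπΔ : TensorProduct.map π.toLinearMap π.toLinearMap ∘ₗ ΔH = ΔB ∘ₗ π.toLinearMap)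
    (hiΔ : TensorProduct.map i.toLinearMap i.toLinearMap ∘ₗ ΔB = ΔH ∘ₗ i.toLinearMap)
    (hπi : ∀ b : B, π (i b) = b) :
    ∀ h : H, ptilde π i h ∈ coinv π := by
  intro h
  have hc := LinearMap.congr_fun (Phi_comp_ptilde π i hπΔ hiΔ hπi) h
  simp only [coe_comp, Function.comp_apply] at hc
  rw [coinv, LinearMap.mem_ker, LinearMap.sub_apply, sub_eq_zero]
  exact hc

/-- `Ψ(h ⊗ b) = Σ h·i(s(b₁)) ⊗ b₂`. -/
noncomputable def PsiL (i : B →ₐ[k] H) : H ⊗[k] B →ₗ[k] H ⊗[k] B :=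
  (mul' k H).rTensor B ∘ₗ (TensorProduct.assoc k H H B).symm.toLinearMap ∘ₗ
    lTensor H (map (i.toLinearMap ∘ₗ HopfAlgebra.antipode (R := k) (A := B))
      (LinearMap.id : B →ₗ[k] B)) ∘ₗ
    lTensor H (ΔB : B →ₗ[k] B ⊗[k] B)

lemma helper1 (x y : H) (w : H ⊗[k] B) :
    (mul' k H).rTensor B ((TensorProduct.assoc k H H B).symm ((x * y) ⊗ₜ w)) =
      (x ⊗ₜ (1 : B)) * ((mul' k H).rTensor B ((TensorProduct.assoc k H H B).symm (y ⊗ₜ w))) := by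
  induction w using TensorProduct.induction_on with
  | zero => simp only [tmul_zero, LinearEquiv.map_zero, _root_.map_zero, mul_zero]
  | tmul h c =>
      simp [TensorProduct.assoc_symm_tmul, Algebra.TensorProduct.tmul_mul_tmul, mul_assoc]
  | add u v hu hv => simp only [tmul_add, _root_.map_add, mul_add, hu, hv]

lemma Psi_mulLeft (x : H) (w : H ⊗[k] B) :
    PsiL i ((x ⊗ₜ (1 : B)) * w) = (x ⊗ₜ (1 : B)) * PsiL i w := by
  induction w using TensorProduct.induction_on with
  | zero => simp only [mul_zero, _root_.map_zero]
  | tmul y c =>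
      have h0 : (x ⊗ₜ[k] (1 : B)) * (y ⊗ₜ[k] c) = (x * y) ⊗ₜ[k] c := by
        simp [Algebra.TensorProduct.tmul_mul_tmul]
      rw [h0]
      show ((mul' k H).rTensor B ∘ₗ (TensorProduct.assoc k H H B).symm.toLinearMap ∘ₗ
        lTensor H (map (i.toLinearMap ∘ₗ HopfAlgebra.antipode (R := k) (A := B))
          (LinearMap.id : B →ₗ[k] B)) ∘ₗ lTensor H (ΔB : B →ₗ[k] B ⊗[k] B)) ((x * y) ⊗ₜ c) = _
      simp only [coe_comp, Function.comp_apply, lTensor_tmul, LinearEquiv.coe_coe]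
      rw [helper1]
      rfl
  | add u v hu hv => simp only [mul_add, _root_.map_add, hu, hv]

lemma N2H : (Algebra.linearMap k H).rTensor B ∘ₗ TensorProduct.mk k k B 1 =
    TensorProduct.mk k H B 1 := by
  ext b
  simp

lemma Psi_j :
    PsiL i ∘ₗ map i.toLinearMap (LinearMap.id : B →ₗ[k] B) ∘ₗ (ΔB : B →ₗ[k] B ⊗[k] B) =
      TensorProduct.mk k H B 1 := by
  have ea : lTensor H (ΔB : B →ₗ[k] B ⊗[k] B) ∘ₗ
      map i.toLinearMap (LinearMap.id : B →ₗ[k] B) =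
      map i.toLinearMap (LinearMap.id : (B ⊗[k] B) →ₗ[k] B ⊗[k] B) ∘ₗ
        lTensor B (ΔB : B →ₗ[k] B ⊗[k] B) := by
    rw [lTensor_comp_map, comp_id, lTensor, ← map_comp, comp_id, id_comp]
  have eb : lTensor H (map (i.toLinearMap ∘ₗ HopfAlgebra.antipode (R := k) (A := B))
      (LinearMap.id : B →ₗ[k] B)) ∘ₗ
      map i.toLinearMap (LinearMap.id : (B ⊗[k] B) →ₗ[k] B ⊗[k] B) =
      map i.toLinearMap (map (i.toLinearMap ∘ₗ HopfAlgebra.antipode (R := k) (A := B))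
        (LinearMap.id : B →ₗ[k] B)) := by
    rw [lTensor_comp_map, comp_id]
  have ec := map_map_comp_assoc_eq (R := k) i.toLinearMap
    (i.toLinearMap ∘ₗ HopfAlgebra.antipode (R := k) (A := B)) (LinearMap.id : B →ₗ[k] B)
  have eid : (TensorProduct.assoc k H H B).symm.toLinearMap ∘ₗ
      (TensorProduct.assoc k H H B).toLinearMap = LinearMap.id := by
    ext x
    simp
  have ein : mul' k H ∘ₗ map i.toLinearMap
      (i.toLinearMap ∘ₗ HopfAlgebra.antipode (R := k) (A := B)) ∘ₗ
      (ΔB : B →ₗ[k] B ⊗[k] B) = Algebra.linearMap k H ∘ₗ Coalgebra.counit := by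
    have e1 : map i.toLinearMap
        (i.toLinearMap ∘ₗ HopfAlgebra.antipode (R := k) (A := B)) =
        map i.toLinearMap i.toLinearMap ∘ₗ
          lTensor B (HopfAlgebra.antipode (R := k) (A := B)) := by
      rw [lTensor, ← map_comp, comp_id]
    rw [e1]
    show (mul' k H ∘ₗ map i.toLinearMap i.toLinearMap) ∘ₗ
      lTensor B (HopfAlgebra.antipode (R := k) (A := B)) ∘ₗ (ΔB : B →ₗ[k] B ⊗[k] B) = _
    rw [mul'_comp_map_algHom i]
    show i.toLinearMap ∘ₗ (mul' k B ∘ₗ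
      lTensor B (HopfAlgebra.antipode (R := k) (A := B)) ∘ₗ (ΔB : B →ₗ[k] B ⊗[k] B)) = _
    rw [HopfAlgebra.mul_antipode_lTensor_comul]
    show (i.toLinearMap ∘ₗ Algebra.linearMap k B) ∘ₗ Coalgebra.counit = _
    rw [ju]
  -- main chain
  rw [PsiL]
  show (mul' k H).rTensor B ∘ₗ (TensorProduct.assoc k H H B).symm.toLinearMap ∘ₗ
    lTensor H (map (i.toLinearMap ∘ₗ HopfAlgebra.antipode (R := k) (A := B))
      (LinearMap.id : B →ₗ[k] B)) ∘ₗ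
    (lTensor H (ΔB : B →ₗ[k] B ⊗[k] B) ∘ₗ
      map i.toLinearMap (LinearMap.id : B →ₗ[k] B)) ∘ₗ (ΔB : B →ₗ[k] B ⊗[k] B) = _
  rw [ea]
  show (mul' k H).rTensor B ∘ₗ (TensorProduct.assoc k H H B).symm.toLinearMap ∘ₗ
    (lTensor H (map (i.toLinearMap ∘ₗ HopfAlgebra.antipode (R := k) (A := B))
      (LinearMap.id : B →ₗ[k] B)) ∘ₗ
      map i.toLinearMap (LinearMap.id : (B ⊗[k] B) →ₗ[k] B ⊗[k] B)) ∘ₗ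
    (lTensor B (ΔB : B →ₗ[k] B ⊗[k] B) ∘ₗ (ΔB : B →ₗ[k] B ⊗[k] B)) = _
  rw [eb, ← Coalgebra.coassoc]
  show (mul' k H).rTensor B ∘ₗ (TensorProduct.assoc k H H B).symm.toLinearMap ∘ₗ
    (map i.toLinearMap (map (i.toLinearMap ∘ₗ HopfAlgebra.antipode (R := k) (A := B))
      (LinearMap.id : B →ₗ[k] B)) ∘ₗ (TensorProduct.assoc k B B B).toLinearMap) ∘ₗ
    rTensor B (ΔB : B →ₗ[k] B ⊗[k] B) ∘ₗ (ΔB : B →ₗ[k] B ⊗[k] B) = _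
  rw [ec]
  show (mul' k H).rTensor B ∘ₗ ((TensorProduct.assoc k H H B).symm.toLinearMap ∘ₗ
    (TensorProduct.assoc k H H B).toLinearMap) ∘ₗ
    map (map i.toLinearMap (i.toLinearMap ∘ₗ HopfAlgebra.antipode (R := k) (A := B)))
      (LinearMap.id : B →ₗ[k] B) ∘ₗ
    rTensor B (ΔB : B →ₗ[k] B ⊗[k] B) ∘ₗ (ΔB : B →ₗ[k] B ⊗[k] B) = _
  rw [eid, id_comp]
  have ee : (mul' k H).rTensor B ∘ₗ
      map (map i.toLinearMap (i.toLinearMap ∘ₗ HopfAlgebra.antipode (R := k) (A := B)))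
        (LinearMap.id : B →ₗ[k] B) ∘ₗ rTensor B (ΔB : B →ₗ[k] B ⊗[k] B) =
      (mul' k H ∘ₗ map i.toLinearMap
        (i.toLinearMap ∘ₗ HopfAlgebra.antipode (R := k) (A := B)) ∘ₗ
        (ΔB : B →ₗ[k] B ⊗[k] B)).rTensor B := by
    rw [rTensor_comp, rTensor_comp]
    rfl
  show ((mul' k H).rTensor B ∘ₗ
      map (map i.toLinearMap (i.toLinearMap ∘ₗ HopfAlgebra.antipode (R := k) (A := B)))
        (LinearMap.id : B →ₗ[k] B) ∘ₗ rTensor B (ΔB : B →ₗ[k] B ⊗[k] B)) ∘ₗ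
    (ΔB : B →ₗ[k] B ⊗[k] B) = _
  rw [ee, ein, rTensor_comp]
  show (Algebra.linearMap k H).rTensor B ∘ₗ
    ((Coalgebra.counit (R := k) (A := B)).rTensor B ∘ₗ (ΔB : B →ₗ[k] B ⊗[k] B)) = _
  rw [Coalgebra.rTensor_counit_comp_comul, N2H]

lemma Psi_Phi_zeta
    (hiΔ : TensorProduct.map i.toLinearMap i.toLinearMap ∘ₗ ΔB = ΔH ∘ₗ i.toLinearMap)
    (hπi : ∀ b : B, π (i b) = b) :
    PsiL i ∘ₗ PhiL π ∘ₗ zetaMap π i = ((coinv π).subtype).rTensor B := by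
  apply TensorProduct.ext'
  intro a b
  have hz : zetaMap π i (a ⊗ₜ b) = (a : H) * i b := by
    simp [zetaMap]
  have hmul : PhiL π ((a : H) * i b) = PhiL π (a : H) * PhiL π (i b) := by
    have h1 := _root_.map_mul (PhiA π) (a : H) (i b)
    have h2 : ∀ x : H, PhiA π x = PhiL π x := fun x => LinearMap.congr_fun (PhiA_toLin π) x
    rw [h2, h2, h2] at h1
    exact h1
  have ha : PhiL π (a : H) = (a : H) ⊗ₜ (1 : B) := by
    have h0 : (map (LinearMap.id : H →ₗ[k] H) π.toLinearMap ∘ₗ (ΔH : H →ₗ[k] H ⊗[k] H) -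
        (TensorProduct.mk k H B).flip 1) (a : H) = 0 := a.2
    rw [LinearMap.sub_apply, sub_eq_zero] at h0
    exact h0
  have hb : PhiL π (i b) =
      map i.toLinearMap (LinearMap.id : B →ₗ[k] B) (Coalgebra.comul (R := k) b) := by
    have := LinearMap.congr_fun (Phi_j π i hiΔ hπi) b
    simpa using this
  have hpsi2 : PsiL i (map i.toLinearMap (LinearMap.id : B →ₗ[k] B)
      (Coalgebra.comul (R := k) b)) = 1 ⊗ₜ b := by
    have := LinearMap.congr_fun (Psi_j i) b
    simpa using this
  calc (PsiL i ∘ₗ PhiL π ∘ₗ zetaMap π i) (a ⊗ₜ[k] b)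
      = PsiL i (PhiL π (zetaMap π i (a ⊗ₜ b))) := rfl
    _ = PsiL i (((a : H) ⊗ₜ (1 : B)) * (map i.toLinearMap (LinearMap.id : B →ₗ[k] B)
        (Coalgebra.comul (R := k) b))) := by rw [hz, hmul, ha, hb]
    _ = ((a : H) ⊗ₜ (1 : B)) * PsiL i (map i.toLinearMap (LinearMap.id : B →ₗ[k] B)
        (Coalgebra.comul (R := k) b)) := Psi_mulLeft i _ _
    _ = ((a : H) ⊗ₜ (1 : B)) * ((1 : H) ⊗ₜ b) := by rw [hpsi2]
    _ = (a : H) ⊗ₜ b := by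
        simp [Algebra.TensorProduct.tmul_mul_tmul]
    _ = ((coinv π).subtype).rTensor B (a ⊗ₜ b) := by simp

end Main

/-- for Hopf algebra maps `i : B → H`, `π : H → B` with `π ∘ i = id`,
`ζ(a ⊗ b) = a i(b)` is a linear isomorphism `H^{co π} ⊗ B ≅ H` with inverse
`h ↦ Σ p(h₁) ⊗ π(h₂)`, where `p(h) = Σ h₁ i(s(π(h₂))) ∈ H^{co π}`. -/
theorem zeta_bijective_with_inverse (π : H →ₐ[k] B) (i : B →ₐ[k] H)
    (hπΔ : TensorProduct.map π.toLinearMap π.toLinearMap ∘ₗ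
        Coalgebra.comul (R := k) (A := H) =
      Coalgebra.comul (R := k) (A := B) ∘ₗ π.toLinearMap)
    (hπε : Coalgebra.counit (R := k) (A := B) ∘ₗ π.toLinearMap =
      Coalgebra.counit (R := k) (A := H))
    (hiΔ : TensorProduct.map i.toLinearMap i.toLinearMap ∘ₗ
        Coalgebra.comul (R := k) (A := B) =
      Coalgebra.comul (R := k) (A := H) ∘ₗ i.toLinearMap)
    (hiε : Coalgebra.counit (R := k) (A := H) ∘ₗ i.toLinearMap =
      Coalgebra.counit (R := k) (A := B))
    (hπi : ∀ b : B, π (i b) = b) :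
    ∃ hmem : ∀ h : H, ptilde π i h ∈ coinv π,
      Function.Bijective (zetaMap π i) ∧
      (∀ h : H,
        zetaMap π i
          ((TensorProduct.map (LinearMap.codRestrict (coinv π) (ptilde π i) hmem)
            π.toLinearMap) (Coalgebra.comul (R := k) h)) = h) ∧
      (∀ x : (↥(coinv π)) ⊗[k] B,
        (TensorProduct.map (LinearMap.codRestrict (coinv π) (ptilde π i) hmem)
          π.toLinearMap) (Coalgebra.comul (R := k) (zetaMap π i x)) = x) := by
  have hmem := hmem_all π i hπΔ hiΔ hπi
  have e1 : zetaMap π i ∘ₗ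
      map (LinearMap.codRestrict (coinv π) (ptilde π i) hmem) π.toLinearMap =
      mul' k H ∘ₗ map (ptilde π i) (i.toLinearMap ∘ₗ π.toLinearMap) := by
    rw [zetaMap]
    show mul' k H ∘ₗ (map (coinv π).subtype i.toLinearMap ∘ₗ
      map (LinearMap.codRestrict (coinv π) (ptilde π i) hmem) π.toLinearMap) = _
    rw [← map_comp, LinearMap.subtype_comp_codRestrict]
  have hcomp : zetaMap π i ∘ₗ
      (map (LinearMap.codRestrict (coinv π) (ptilde π i) hmem) π.toLinearMap ∘ₗ
        (Coalgebra.comul (R := k) (A := H) : H →ₗ[k] H ⊗[k] H)) = LinearMap.id := by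
    calc zetaMap π i ∘ₗ
        (map (LinearMap.codRestrict (coinv π) (ptilde π i) hmem) π.toLinearMap ∘ₗ
          (Coalgebra.comul (R := k) (A := H) : H →ₗ[k] H ⊗[k] H))
        = (zetaMap π i ∘ₗ
            map (LinearMap.codRestrict (coinv π) (ptilde π i) hmem) π.toLinearMap) ∘ₗ
          (Coalgebra.comul (R := k) (A := H) : H →ₗ[k] H ⊗[k] H) := rfl
      _ = (mul' k H ∘ₗ map (ptilde π i) (i.toLinearMap ∘ₗ π.toLinearMap)) ∘ₗ
          (Coalgebra.comul (R := k) (A := H) : H →ₗ[k] H ⊗[k] H) := by rw [e1]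
      _ = conv k (ptilde π i) (i.toLinearMap ∘ₗ π.toLinearMap) := rfl
      _ = LinearMap.id := conv_ptilde π i hπΔ hπε
  have hright : ∀ h : H, zetaMap π i
      ((map (LinearMap.codRestrict (coinv π) (ptilde π i) hmem) π.toLinearMap)
        (Coalgebra.comul (R := k) h)) = h := by
    intro h
    have := LinearMap.congr_fun hcomp h
    simpa using this
  have hinj : Function.Injective (zetaMap π i) := by
    have h5 := Psi_Phi_zeta π i hiΔ hπi
    have hs : Function.Injective (((coinv π).subtype).rTensor B) :=
      Module.Flat.rTensor_preserves_injective_linearMap _ (Submodule.injective_subtype _)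
    rw [← h5] at hs
    simp only [coe_comp] at hs
    exact (hs.of_comp).of_comp
  exact ⟨hmem, ⟨hinj, fun h => ⟨_, hright h⟩⟩, hright,
    fun x => hinj (hright (zetaMap π i x))⟩
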